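/- arXiv:math/0311488 — 2 statements merged into one kernel-verified Lean document; each statement's English description precedes it below -/
import Mathlib

section
/- If L is a Lie algebra with trivial center and D is a derivation of Der(L) which vanishes on ad(x) for all x ∈ L, then D = 0. In particular, every derivation of Der(L) is determined by its restriction to ad(L). -/
/-- If `L` has trivial center and a derivation `D` of `Der L` vanishes on all inner
derivations, then `D = 0`; in particular every derivation of `Der L` is determined by
its restriction to `ad L`. -/
theorem derivation_of_der_trivial_center
    {K L : Type*} [Field K] [LieRing L] [LieAlgebra K L]
    (h : LieAlgebra.center K L = ⊥) :
    (∀ D : LieDerivation K (LieDerivation K L L) (LieDerivation K L L),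
        (∀ x : L, D (LieDerivation.ad K L x) = 0) → D = 0) ∧
    (∀ D₁ D₂ : LieDerivation K (LieDerivation K L L) (LieDerivation K L L),
        (∀ x : L, D₁ (LieDerivation.ad K L x) = D₂ (LieDerivation.ad K L x)) → D₁ = D₂) := by
  have inj := LieDerivation.injective_ad_of_center_eq_bot (R := K) h
  have main : ∀ D : LieDerivation K (LieDerivation K L L) (LieDerivation K L L),
      (∀ x : L, D (LieDerivation.ad K L x) = 0) → D = 0 := by
    intro D hD
    ext E x
    have key : LieDerivation.ad K L ((D E) x) = 0 := by
      have h1 : D ⁅E, LieDerivation.ad K L x⁆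
          = ⁅E, D (LieDerivation.ad K L x)⁆ + ⁅D E, LieDerivation.ad K L x⁆ :=
        D.apply_lie_eq_add _ _
      rw [hD x, lie_zero, zero_add, LieDerivation.lie_der_ad_eq_ad_der] at h1
      rw [← LieDerivation.lie_der_ad_eq_ad_der, ← h1, hD]
    have := inj (a₂ := 0) (by simpa using key)
    simpa using this
  refine ⟨main, fun D₁ D₂ hD ↦ ?_⟩
  have := main (D₁ - D₂) (fun x ↦ by simp [hD x])
  rwa [sub_eq_zero] at this
end

section
/- In the free Lie algebra L on two generators x₁, x₂, the map AD_h for h = [x₁,x₂]·x₁ (an element of the free associative algebra) is the zero derivation; explicitly, the derivation of L determined by x ↦ (ad(x₁)∘ad(x₂) − ad(x₂)∘ad(x₁))∘ad(x₁)(x) on generators vanishes identically. -/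
/-- In the free Lie algebra on two generators `x₁, x₂`, the derivation `AD_h`
associated to the associative polynomial `h = [x₁,x₂]·x₁` vanishes: its value
`((ad x₁ ∘ ad x₂ − ad x₂ ∘ ad x₁) ∘ ad x₁)(x)` on each generator `x` is zero
(hence the derivation it determines vanishes identically). -/
theorem AD_of_bracket_x1x2_mul_x1_eq_zero
    {K : Type*} [Field K] [CharZero K] :
    ∀ i : Fin 2,
      ⁅FreeLieAlgebra.of K (0 : Fin 2), ⁅FreeLieAlgebra.of K (1 : Fin 2),
          ⁅FreeLieAlgebra.of K (0 : Fin 2), FreeLieAlgebra.of K i⁆⁆⁆ -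
        ⁅FreeLieAlgebra.of K (1 : Fin 2), ⁅FreeLieAlgebra.of K (0 : Fin 2),
          ⁅FreeLieAlgebra.of K (0 : Fin 2), FreeLieAlgebra.of K i⁆⁆⁆ = 0 := by
  intro i
  fin_cases i <;> simp [← lie_lie]
end
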